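/- Suppose m > 0 and Requirement 1 holds. Let X* be the set of minimizers of f over C, let x* be the unique minimizer of g over X*, and for each k ≥ 1 let x_k* be the unique minimizer of J_k over ℝⁿ. Then x_k* converges to x* as k → ∞, i.e., ‖x_k* − x*‖ → 0. -/

import Mathlib

open Matrix Filter

noncomputable def fObj {n : ℕ} (Q : Matrix (Fin n) (Fin n) ℝ) (q : Fin n → ℝ) (x : Fin n → ℝ) : ℝ :=
  (1 / 2) * (x ⬝ᵥ Q.mulVec x) + q ⬝ᵥ x

noncomputable def gCon {n : ℕ} (A : Matrix (Fin n) (Fin n) ℝ) (v : Fin n → ℝ) (x : Fin n → ℝ) : ℝ :=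
  (x - v) ⬝ᵥ A.mulVec (x - v)

noncomputable def pPen {n : ℕ} (A : Matrix (Fin n) (Fin n) ℝ) (v : Fin n → ℝ) (m : ℝ) (k : ℕ)
    (x : Fin n → ℝ) : ℝ :=
  (m / (k : ℝ)) * (gCon A v x) ^ k

noncomputable def Jaux {n : ℕ} (Q : Matrix (Fin n) (Fin n) ℝ) (q : Fin n → ℝ)
    (A : Matrix (Fin n) (Fin n) ℝ) (v : Fin n → ℝ) (m : ℝ) (k : ℕ) (x : Fin n → ℝ) : ℝ :=
  fObj Q q x + pPen A v m k x

noncomputable def gradF {n : ℕ} (Q : Matrix (Fin n) (Fin n) ℝ) (q : Fin n → ℝ)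
    (x : Fin n → ℝ) : Fin n → ℝ :=
  Q.mulVec x + q

noncomputable def gradG {n : ℕ} (A : Matrix (Fin n) (Fin n) ℝ) (v : Fin n → ℝ)
    (x : Fin n → ℝ) : Fin n → ℝ :=
  (2 : ℝ) • A.mulVec (x - v)

noncomputable def gradJ {n : ℕ} (Q : Matrix (Fin n) (Fin n) ℝ) (q : Fin n → ℝ)
    (A : Matrix (Fin n) (Fin n) ℝ) (v : Fin n → ℝ) (m : ℝ) (k : ℕ) (x : Fin n → ℝ) : Fin n → ℝ :=
  gradF Q q x + (m * (gCon A v x) ^ (k - 1)) • gradG A v x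

noncomputable def lambdaMax {n : ℕ} (M : Matrix (Fin n) (Fin n) ℝ) : ℝ :=
  sSup {μ : ℝ | Module.End.HasEigenvalue (Matrix.toLin' M) μ}

noncomputable def lambdaMin {n : ℕ} (M : Matrix (Fin n) (Fin n) ℝ) : ℝ :=
  sInf {μ : ℝ | Module.End.HasEigenvalue (Matrix.toLin' M) μ}

noncomputable def enorm {n : ℕ} (w : Fin n → ℝ) : ℝ := Real.sqrt (w ⬝ᵥ w)

def Req1 {n : ℕ} (Q : Matrix (Fin n) (Fin n) ℝ) (q : Fin n → ℝ)
    (A : Matrix (Fin n) (Fin n) ℝ) (v : Fin n → ℝ) (m : ℝ) : Prop :=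
  ∀ x : Fin n → ℝ, gCon A v x = 1 →
    0 ≤ gradG A v x ⬝ᵥ (gradF Q q x + m • gradG A v x)

noncomputable def Lsmooth {n : ℕ} (Q A : Matrix (Fin n) (Fin n) ℝ) (m : ℝ) (k : ℕ) : ℝ :=
  lambdaMax (Q + (m * (4 * (k : ℝ) - 2)) • A)

def Req2 {n : ℕ} (Q : Matrix (Fin n) (Fin n) ℝ) (q : Fin n → ℝ)
    (A : Matrix (Fin n) (Fin n) ℝ) (v : Fin n → ℝ) (m : ℝ) : Prop :=
  ∀ x : Fin n → ℝ, gCon A v x = 1 →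
    ((gradF Q q x + m • gradG A v x) ⬝ᵥ (gradF Q q x + m • gradG A v x)) * _root_.enorm (gradG A v x) ≤
      2 * (Real.sqrt (lambdaMin A) / lambdaMax A) * Lsmooth Q A m 1 *
        ((gradF Q q x + m • gradG A v x) ⬝ᵥ gradG A v x)

/-!
Requirement 1 extends from the boundary of `C` to its exterior. On the line `s ↦ v + s • (x - v)`
both gradients are affine and `∇g` scales by `s`, so `⟨∇g, ∇f + m∇g⟩` equals `s` times an affine
function of `s`; its signs at the two boundary points `s = ± g(x)^(-1/2)` force that affine
function to be nonnegative at `s = 1`. If `g(x_k*) > 1` with `k ≥ 2`, stationarity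
`∇f + m g^(k-1) ∇g = 0` contradicts this, because `g^(k-1) > 1`. Hence `x_k*` lies in the
compact set `C`, and `J_k(x_k*) ≤ J_k(x*)` gives `g(x_k*) ≤ g(x*)` and `f(x_k*) ≤ f(x*) + m/k`.
Every cluster point of `x_k*` therefore lies in `X*` with `g ≤ g(x*)`; since `X*` is convex and
`g` strictly convex, it is `x*`.
-/

theorem MapClusterPt.apply_eq_of_tendsto_comp {α X Y : Type*} [TopologicalSpace X]
    [TopologicalSpace Y] [T2Space Y] {F : Filter α} {u : α → X} {x : X} {f : X → Y} {y : Y}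
    (hx : MapClusterPt x F u) (hf : ContinuousAt f x) (hfu : Tendsto (f ∘ u) F (nhds y)) :
    f x = y := by
  by_contra hne
  exact clusterPt_iff_not_disjoint.1 (ClusterPt.mono (hx.continuousAt_comp hf) hfu)
    (disjoint_nhds_nhds.2 hne)

namespace Matrix

variable {ι : Type*} [Fintype ι] {M : Matrix ι ι ℝ}

theorem IsHermitian.dotProduct_mulVec_comm (hM : M.IsHermitian) (x y : ι → ℝ) :
    x ⬝ᵥ M *ᵥ y = y ⬝ᵥ M *ᵥ x := by
  rw [dotProduct_mulVec, ← mulVec_transpose, ← conjTranspose_eq_transpose_of_trivial, hM,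
    dotProduct_comm]

theorem IsHermitian.quadForm_add_smul (hM : M.IsHermitian) (x d : ι → ℝ) (t : ℝ) :
    (x + t • d) ⬝ᵥ M *ᵥ (x + t • d) =
      x ⬝ᵥ M *ᵥ x + t * (2 * (d ⬝ᵥ M *ᵥ x)) + t ^ 2 * (d ⬝ᵥ M *ᵥ d) := by
  simp only [mulVec_add, mulVec_smul, dotProduct_add, add_dotProduct, dotProduct_smul,
    smul_dotProduct, smul_eq_mul, hM.dotProduct_mulVec_comm x d]
  ring

theorem IsHermitian.hasDerivAt_quadForm_add_smul (hM : M.IsHermitian) (x d : ι → ℝ) :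
    HasDerivAt (fun t : ℝ => (x + t • d) ⬝ᵥ M *ᵥ (x + t • d)) (2 * (d ⬝ᵥ M *ᵥ x)) 0 := by
  rw [funext (hM.quadForm_add_smul x d)]
  have h := (((hasDerivAt_id (0 : ℝ)).mul_const (2 * (d ⬝ᵥ M *ᵥ x))).const_add
    (x ⬝ᵥ M *ᵥ x)).add ((hasDerivAt_pow 2 (0 : ℝ)).mul_const (d ⬝ᵥ M *ᵥ d))
  norm_num at h
  exact h

theorem IsHermitian.quadForm_midpoint (hM : M.IsHermitian) (a b : ι → ℝ) :
    ((1 / 2 : ℝ) • (a + b)) ⬝ᵥ M *ᵥ ((1 / 2 : ℝ) • (a + b)) =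
      (a ⬝ᵥ M *ᵥ a + b ⬝ᵥ M *ᵥ b) / 2 - (a - b) ⬝ᵥ M *ᵥ (a - b) / 4 := by
  simp only [mulVec_add, mulVec_smul, mulVec_sub, dotProduct_add, add_dotProduct,
    dotProduct_smul, smul_dotProduct, dotProduct_sub, sub_dotProduct, smul_eq_mul,
    hM.dotProduct_mulVec_comm a b]
  ring

theorem PosDef.exists_pos_mul_norm_sq_le (hM : M.PosDef) :
    ∃ c > 0, ∀ w : ι → ℝ, c * ‖w‖ ^ 2 ≤ w ⬝ᵥ M *ᵥ w := by
  have hcont : Continuous fun w : ι → ℝ => w ⬝ᵥ M *ᵥ w := by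
    simp only [dotProduct, mulVec]
    fun_prop
  have hpos : ∀ u ∈ Metric.sphere (0 : ι → ℝ) 1, 0 < u ⬝ᵥ M *ᵥ u := fun u hu => by
    simpa using hM.dotProduct_mulVec_pos (ne_zero_of_mem_unit_sphere ⟨u, hu⟩)
  obtain ⟨c, hc, hcle⟩ := (isCompact_sphere 0 1).exists_forall_le' hcont.continuousOn hpos
  refine ⟨c, hc, fun w => ?_⟩
  rcases eq_or_ne w 0 with rfl | hw
  · simp
  have hw' : 0 < ‖w‖ := norm_pos_iff.2 hw
  have hunit : ‖w‖⁻¹ • w ∈ Metric.sphere (0 : ι → ℝ) 1 := by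
    simp [norm_smul, hw'.ne']
  have h := hcle _ hunit
  simp only [mulVec_smul, dotProduct_smul, smul_dotProduct, smul_eq_mul] at h
  field_simp at h
  linarith

end Matrix

section AuxiliaryProblem

variable {n : ℕ} {Q A : Matrix (Fin n) (Fin n) ℝ} {q v : Fin n → ℝ} {m : ℝ} {k : ℕ}

theorem continuous_fObj (Q : Matrix (Fin n) (Fin n) ℝ) (q : Fin n → ℝ) :
    Continuous (fObj Q q) := by
  unfold fObj
  simp only [dotProduct, mulVec]
  fun_prop

theorem continuous_gCon (A : Matrix (Fin n) (Fin n) ℝ) (v : Fin n → ℝ) :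
    Continuous (gCon A v) := by
  unfold gCon
  simp only [dotProduct, mulVec]
  fun_prop

theorem Filter.Tendsto.enorm_sub_tendsto_zero {α : Type*} {l : Filter α} {x : α → Fin n → ℝ}
    {y : Fin n → ℝ} (h : Tendsto x l (nhds y)) :
    Tendsto (fun a => _root_.enorm (x a - y)) l (nhds 0) := by
  have hcont : Continuous fun w : Fin n → ℝ => _root_.enorm (w - y) := by
    unfold _root_.enorm
    simp only [dotProduct]
    fun_prop
  have hzero : _root_.enorm (y - y) = 0 := by simp [_root_.enorm]
  exact hzero ▸ (hcont.tendsto y).comp h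

theorem gCon_nonneg (hA : A.PosSemidef) (x : Fin n → ℝ) : 0 ≤ gCon A v x := by
  simpa [gCon] using hA.dotProduct_mulVec_nonneg (x - v)

theorem isCompact_setOf_gCon_le (hA : A.PosDef) (v : Fin n → ℝ) (r : ℝ) :
    IsCompact {x | gCon A v x ≤ r} := by
  obtain ⟨c, hc, hcoer⟩ := hA.exists_pos_mul_norm_sq_le
  refine (isCompact_closedBall v √(r / c)).of_isClosed_subset
    (isClosed_le (continuous_gCon A v) continuous_const) fun x hx => ?_
  rw [Metric.mem_closedBall, dist_eq_norm, ← abs_norm]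
  refine Real.abs_le_sqrt ((le_div_iff₀' hc).2 ?_)
  exact (hcoer (x - v)).trans hx

theorem Req1.dotProduct_nonneg_of_one_le (hreq1 : Req1 Q q A v m) {x : Fin n → ℝ}
    (hx : 1 ≤ gCon A v x) : 0 ≤ gradG A v x ⬝ᵥ (gradF Q q x + m • gradG A v x) := by
  set w := x - v
  set G := gradG A v x
  set a := G ⬝ᵥ gradF Q q v
  set b := G ⬝ᵥ Q *ᵥ w + m * (G ⬝ᵥ G)
  have hline : ∀ s : ℝ, gradG A v (v + s • w) ⬝ᵥ
      (gradF Q q (v + s • w) + m • gradG A v (v + s • w)) = s * (a + s * b) := fun s => by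
    have hG : gradG A v (v + s • w) = s • G := by
      simp only [G, w, gradG, add_sub_cancel_left, mulVec_smul, smul_comm s (2 : ℝ)]
    rw [hG]
    simp only [gradF, mulVec_add, mulVec_smul, smul_dotProduct, dotProduct_add, dotProduct_smul,
      smul_eq_mul, a, b]
    ring
  have hg : ∀ s : ℝ, gCon A v (v + s • w) = s ^ 2 * gCon A v x := fun s => by
    simp only [gCon, add_sub_cancel_left, mulVec_smul, smul_dotProduct, dotProduct_smul,
      smul_eq_mul, w]
    ring
  set t := (√(gCon A v x))⁻¹
  have ht : 0 < t := by positivity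
  have ht1 : t ≤ 1 := inv_le_one_of_one_le₀ (Real.one_le_sqrt.2 hx)
  have hts : t ^ 2 * gCon A v x = 1 := by
    rw [inv_pow, Real.sq_sqrt (zero_le_one.trans hx), inv_mul_cancel₀ (by positivity)]
  have hplus := hreq1 _ ((hg t).trans hts)
  have hminus := hreq1 _ ((hg (-t)).trans (by rwa [neg_sq]))
  rw [hline] at hplus hminus
  have hat_one := hline 1
  rw [show v + (1 : ℝ) • w = x by simp [w]] at hat_one
  have haff_plus : 0 ≤ a + t * b := (mul_nonneg_iff_of_pos_left ht).1 hplus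
  have haff_minus : 0 ≤ t * b - a := (mul_nonneg_iff_of_pos_left ht).1 (by linarith)
  have hb : 0 ≤ b := (mul_nonneg_iff_of_pos_left ht).1 (by linarith)
  rw [hat_one]
  linarith [mul_nonneg (sub_nonneg.2 ht1) hb]

theorem hasDerivAt_fObj_add_smul (hQ : Q.IsHermitian) (q x d : Fin n → ℝ) :
    HasDerivAt (fun t : ℝ => fObj Q q (x + t • d)) (d ⬝ᵥ gradF Q q x) 0 := by
  have hlin : HasDerivAt (fun t : ℝ => q ⬝ᵥ (x + t • d)) (q ⬝ᵥ d) 0 := by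
    simp only [dotProduct_add, dotProduct_smul, smul_eq_mul]
    simpa using ((hasDerivAt_id (0 : ℝ)).mul_const (q ⬝ᵥ d)).const_add (q ⬝ᵥ x)
  refine (((hQ.hasDerivAt_quadForm_add_smul x d).const_mul (1 / 2 : ℝ)).add hlin).congr_deriv ?_
  simp only [gradF, dotProduct_add, dotProduct_comm q d]
  ring

theorem hasDerivAt_gCon_add_smul (hA : A.IsHermitian) (v x d : Fin n → ℝ) :
    HasDerivAt (fun t : ℝ => gCon A v (x + t • d)) (d ⬝ᵥ gradG A v x) 0 := by
  simp only [gCon, add_sub_right_comm x _ v]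
  refine (hA.hasDerivAt_quadForm_add_smul (x - v) d).congr_deriv ?_
  simp only [gradG, dotProduct_smul, smul_eq_mul]

theorem hasDerivAt_Jaux_add_smul (hQ : Q.IsHermitian) (hA : A.IsHermitian) (hk : k ≠ 0)
    (x d : Fin n → ℝ) :
    HasDerivAt (fun t : ℝ => Jaux Q q A v m k (x + t • d)) (d ⬝ᵥ gradJ Q q A v m k x) 0 := by
  have hpen := ((hasDerivAt_gCon_add_smul hA v x d).pow k).const_mul (m / k)
  refine ((hasDerivAt_fObj_add_smul hQ q x d).add hpen).congr_deriv ?_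
  simp only [gradJ, zero_smul, add_zero, dotProduct_add, dotProduct_smul, smul_eq_mul]
  field_simp

theorem gradJ_eq_zero_of_forall_le (hQ : Q.IsHermitian) (hA : A.IsHermitian) (hk : k ≠ 0)
    {x : Fin n → ℝ} (hx : ∀ y, Jaux Q q A v m k x ≤ Jaux Q q A v m k y) :
    gradJ Q q A v m k x = 0 := by
  set d := gradJ Q q A v m k x
  have hmin : IsLocalMin (fun t : ℝ => Jaux Q q A v m k (x + t • d)) 0 :=
    Eventually.of_forall fun t => by simpa using hx (x + t • d)
  exact dotProduct_self_eq_zero.1 (hmin.hasDerivAt_eq_zero (hasDerivAt_Jaux_add_smul hQ hA hk x d))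

theorem gCon_le_one_of_forall_le (hQ : Q.IsHermitian) (hA : A.IsHermitian) (hm : 0 < m)
    (hreq1 : Req1 Q q A v m) (hk : 2 ≤ k) {x : Fin n → ℝ}
    (hx : ∀ y, Jaux Q q A v m k x ≤ Jaux Q q A v m k y) :
    gCon A v x ≤ 1 := by
  by_contra! hc
  set G := gradG A v x
  have hG : 0 < G ⬝ᵥ G := by
    have hgG : gCon A v x = (x - v) ⬝ᵥ G / 2 := by
      simp only [G, gCon, gradG, dotProduct_smul, smul_eq_mul]
      ring
    refine lt_of_le_of_ne (by simpa using dotProduct_star_self_nonneg G) fun h => ?_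
    rw [eq_comm, dotProduct_self_eq_zero] at h
    rw [hgG, h, dotProduct_zero] at hc
    norm_num at hc
  have hstat : G ⬝ᵥ gradJ Q q A v m k x = 0 := by
    rw [gradJ_eq_zero_of_forall_le hQ hA (by omega) hx, dotProduct_zero]
  have hreq := hreq1.dotProduct_nonneg_of_one_le hc.le
  have hpow : 1 < gCon A v x ^ (k - 1) := one_lt_pow₀ hc (by omega)
  simp only [gradJ, dotProduct_add, dotProduct_smul, smul_eq_mul] at hstat hreq
  linarith [mul_pos (mul_pos hm hG) (sub_pos.2 hpow)]

theorem gCon_le_of_forall_le (hA : A.PosSemidef) (hm : 0 < m) (hk : k ≠ 0) {x y : Fin n → ℝ}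
    (hx : ∀ z, Jaux Q q A v m k x ≤ Jaux Q q A v m k z) (hfy : fObj Q q y ≤ fObj Q q x) :
    gCon A v x ≤ gCon A v y := by
  have h := hx y
  simp only [Jaux, pPen] at h
  have hmk : 0 < m / k := by positivity
  exact le_of_pow_le_pow_left₀ hk (gCon_nonneg hA y) (le_of_mul_le_mul_left (by linarith) hmk)

theorem fObj_le_of_forall_le (hA : A.PosSemidef) (hm : 0 ≤ m) {x y : Fin n → ℝ}
    (hx : ∀ z, Jaux Q q A v m k x ≤ Jaux Q q A v m k z) (hy : gCon A v y ≤ 1) :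
    fObj Q q x ≤ fObj Q q y + m / k := by
  have h := hx y
  simp only [Jaux, pPen] at h
  have hmk : 0 ≤ m / k := by positivity
  have hpen_x : 0 ≤ m / k * gCon A v x ^ k := mul_nonneg hmk (pow_nonneg (gCon_nonneg hA x) k)
  have hpen_y : m / k * gCon A v y ^ k ≤ m / k :=
    mul_le_of_le_one_right hmk (pow_le_one₀ (gCon_nonneg hA y) hy)
  linarith

end AuxiliaryProblem

section OptimalSet

variable {n : ℕ} {Q A : Matrix (Fin n) (Fin n) ℝ} {q v : Fin n → ℝ}

def optimalSet (Q : Matrix (Fin n) (Fin n) ℝ) (q : Fin n → ℝ) (A : Matrix (Fin n) (Fin n) ℝ)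
    (v : Fin n → ℝ) : Set (Fin n → ℝ) :=
  {y | gCon A v y ≤ 1 ∧ ∀ z, gCon A v z ≤ 1 → fObj Q q y ≤ fObj Q q z}

theorem gCon_midpoint (hA : A.IsHermitian) (a b : Fin n → ℝ) :
    gCon A v ((1 / 2 : ℝ) • (a + b)) =
      (gCon A v a + gCon A v b) / 2 - (a - b) ⬝ᵥ A *ᵥ (a - b) / 4 := by
  have hsub : (1 / 2 : ℝ) • (a + b) - v = (1 / 2 : ℝ) • ((a - v) + (b - v)) := by
    module
  simp only [gCon]
  rw [hsub, hA.quadForm_midpoint, sub_sub_sub_cancel_right]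

theorem fObj_midpoint_le (hQ : Q.PosSemidef) (a b : Fin n → ℝ) :
    fObj Q q ((1 / 2 : ℝ) • (a + b)) ≤ (fObj Q q a + fObj Q q b) / 2 := by
  have hnonneg : 0 ≤ (a - b) ⬝ᵥ Q *ᵥ (a - b) := by
    simpa using hQ.dotProduct_mulVec_nonneg (a - b)
  have hlin : q ⬝ᵥ ((1 / 2 : ℝ) • (a + b)) = (q ⬝ᵥ a + q ⬝ᵥ b) / 2 := by
    simp only [dotProduct_smul, dotProduct_add, smul_eq_mul]
    ring
  simp only [fObj, hQ.isHermitian.quadForm_midpoint, hlin]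
  linarith

theorem midpoint_mem_optimalSet (hQ : Q.PosSemidef) (hA : A.PosSemidef) {a b : Fin n → ℝ}
    (ha : a ∈ optimalSet Q q A v) (hb : b ∈ optimalSet Q q A v) :
    (1 / 2 : ℝ) • (a + b) ∈ optimalSet Q q A v := by
  have hnonneg : 0 ≤ (a - b) ⬝ᵥ A *ᵥ (a - b) := by
    simpa using hA.dotProduct_mulVec_nonneg (a - b)
  refine ⟨?_, fun z hz => ?_⟩
  · rw [gCon_midpoint hA.isHermitian]
    linarith [ha.1, hb.1]
  · linarith [fObj_midpoint_le (q := q) hQ a b, ha.2 z hz, hb.2 z hz]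

theorem eq_of_mem_optimalSet (hQ : Q.PosSemidef) (hA : A.PosDef) {y z : Fin n → ℝ}
    (hy : y ∈ optimalSet Q q A v) (hz : z ∈ optimalSet Q q A v) (hyz : gCon A v y ≤ gCon A v z)
    (hz_min : ∀ w ∈ optimalSet Q q A v, gCon A v z ≤ gCon A v w) :
    y = z := by
  have hmid := hz_min _ (midpoint_mem_optimalSet hQ hA.posSemidef hy hz)
  rw [gCon_midpoint hA.isHermitian] at hmid
  by_contra hne
  have hpos : 0 < (y - z) ⬝ᵥ A *ᵥ (y - z) := by
    simpa using hA.dotProduct_mulVec_pos (sub_ne_zero.2 hne)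
  linarith

end OptimalSet

theorem auxiliary_minimizers_converge_general {n : ℕ}
    (Q A : Matrix (Fin n) (Fin n) ℝ) (q v : Fin n → ℝ)
    (hQ : Q.PosSemidef) (hA : A.PosDef) (m : ℝ) (hm : 0 < m)
    (hreq1 : Req1 Q q A v m)
    (xstar : Fin n → ℝ)
    (hxstar_mem : gCon A v xstar ≤ 1 ∧ ∀ y : Fin n → ℝ, gCon A v y ≤ 1 → fObj Q q xstar ≤ fObj Q q y)
    (hxstar_g : ∀ y : Fin n → ℝ,
      (gCon A v y ≤ 1 ∧ ∀ z : Fin n → ℝ, gCon A v z ≤ 1 → fObj Q q y ≤ fObj Q q z) →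
      gCon A v xstar ≤ gCon A v y)
    (xks : ℕ → (Fin n → ℝ))
    (hmin : ∀ k : ℕ, 1 ≤ k →
      ∀ x : Fin n → ℝ, Jaux Q q A v m k (xks k) ≤ Jaux Q q A v m k x) :
    Filter.Tendsto (fun k : ℕ => _root_.enorm (xks k - xstar)) Filter.atTop (nhds 0) := by
  have hfeas : ∀ᶠ k in atTop, gCon A v (xks k) ≤ 1 := eventually_atTop.2 ⟨2, fun k hk =>
    gCon_le_one_of_forall_le hQ.isHermitian hA.isHermitian hm hreq1 hk (hmin k (by omega))⟩
  have hg : ∀ᶠ k in atTop, gCon A v (xks k) ≤ gCon A v xstar :=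
    (hfeas.and (eventually_ge_atTop 1)).mono fun k ⟨hk, hk1⟩ =>
      gCon_le_of_forall_le hA.posSemidef hm (by omega) (hmin k hk1) (hxstar_mem.2 _ hk)
  have hf : Tendsto (fun k => fObj Q q (xks k)) atTop (nhds (fObj Q q xstar)) := by
    have hlim : Tendsto (fun k : ℕ => fObj Q q xstar + m / k) atTop (nhds (fObj Q q xstar)) := by
      simpa using tendsto_const_nhds.add (tendsto_const_div_atTop_nhds_zero_nat m)
    exact tendsto_of_tendsto_of_tendsto_of_le_of_le' tendsto_const_nhds hlim
      (hfeas.mono fun k hk => hxstar_mem.2 _ hk)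
      ((eventually_ge_atTop 1).mono fun k hk =>
        fObj_le_of_forall_le hA.posSemidef hm.le (hmin k hk) hxstar_mem.1)
  refine Tendsto.enorm_sub_tendsto_zero <|
    (isCompact_setOf_gCon_le hA v 1).tendsto_nhds_of_unique_mapClusterPt hfeas fun y hyC hy => ?_
  have hgy : gCon A v y ≤ gCon A v xstar :=
    (isClosed_le (continuous_gCon A v) continuous_const).mem_of_mapClusterPt hy hg
  have hfy : fObj Q q y = fObj Q q xstar :=
    hy.apply_eq_of_tendsto_comp (continuous_fObj Q q).continuousAt hf
  exact eq_of_mem_optimalSet hQ hA ⟨hyC, fun z hz => hfy ▸ hxstar_mem.2 z hz⟩ hxstar_mem hgy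
    hxstar_g

/-- With `m > 0` and Requirement 1, the sequence of auxiliary minimizers
`x_k*` converges to `x*`, the unique minimizer of `g` over the set `X*` of minimizers
of `f` over `C`, i.e. `‖x_k* − x*‖ → 0` as `k → ∞`. -/
theorem auxiliary_minimizers_converge {n : ℕ} (hn : 1 ≤ n)
    (Q A : Matrix (Fin n) (Fin n) ℝ) (q v : Fin n → ℝ)
    (hQ : Q.PosSemidef) (hA : A.PosDef) (m : ℝ) (hm : 0 < m)
    (hreq1 : Req1 Q q A v m)
    (xstar : Fin n → ℝ)
    (hxstar_mem : gCon A v xstar ≤ 1 ∧ ∀ y : Fin n → ℝ, gCon A v y ≤ 1 → fObj Q q xstar ≤ fObj Q q y)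
    (hxstar_g : ∀ y : Fin n → ℝ,
      (gCon A v y ≤ 1 ∧ ∀ z : Fin n → ℝ, gCon A v z ≤ 1 → fObj Q q y ≤ fObj Q q z) →
      gCon A v xstar ≤ gCon A v y)
    (xks : ℕ → (Fin n → ℝ))
    (hmin : ∀ k : ℕ, 1 ≤ k →
      ∀ x : Fin n → ℝ, Jaux Q q A v m k (xks k) ≤ Jaux Q q A v m k x) :
    Filter.Tendsto (fun k : ℕ => _root_.enorm (xks k - xstar)) Filter.atTop (nhds 0) :=
  auxiliary_minimizers_converge_general Q A q v hQ hA m hm hreq1 xstar hxstar_mem hxstar_g xks hmin
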